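/- arXiv:2512.00192 — 2 statements merged into one kernel-verified Lean document; each statement's English description precedes it below -/
import Mathlib

section
/- Every global solution of the system T' = σ(I − T), I' = T(r₀ − M) − I, M' = TI − βM (σ, r₀, β > 0) is bounded: with a = σ + r₀, m = min{2σ, 2, β}, c = βa², the function V(t) = T(t)² + I(t)² + (M(t) − a)² satisfies sup_{t≥0} V(t) ≤ max{V(0), c/m}. -/
theorem global_solutions_bounded
    (σ r₀ β : ℝ) (hσ : 0 < σ) (hr : 0 < r₀) (hβ : 0 < β)
    (T I M : ℝ → ℝ)
    (hT : ∀ t, 0 ≤ t → HasDerivAt T (σ * (I t - T t)) t)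
    (hI : ∀ t, 0 ≤ t → HasDerivAt I (T t * (r₀ - M t) - I t) t)
    (hM : ∀ t, 0 ≤ t → HasDerivAt M (T t * I t - β * M t) t)
    (a m c : ℝ) (ha : a = σ + r₀) (hm : m = min (2 * σ) (min 2 β))
    (hc : c = β * a ^ 2)
    (V : ℝ → ℝ)
    (hV : ∀ t, V t = (T t) ^ 2 + (I t) ^ 2 + (M t - a) ^ 2) :
    ∀ t, 0 ≤ t → V t ≤ max (V 0) (c / m) := by
  have hm1 : m ≤ 2 * σ := hm ▸ min_le_left _ _
  have hm2 : m ≤ 2 := hm ▸ le_trans (min_le_right _ _) (min_le_left _ _)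
  have hm3 : m ≤ β := hm ▸ le_trans (min_le_right _ _) (min_le_right _ _)
  have hm0 : 0 < m := by
    rw [hm]; exact lt_min (by linarith) (lt_min two_pos hβ)
  have hVeq : V = fun t => (T t) ^ 2 + (I t) ^ 2 + (M t - a) ^ 2 := funext hV
  -- derivative of V
  have hVd : ∀ t, 0 ≤ t → HasDerivAt V
      ((2:ℕ) * T t ^ 1 * (σ * (I t - T t)) + (2:ℕ) * I t ^ 1 * (T t * (r₀ - M t) - I t)
        + (2:ℕ) * (M t - a) ^ 1 * (T t * I t - β * M t)) t := by
    intro t ht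
    rw [hVeq]
    exact (((hT t ht).pow 2).add ((hI t ht).pow 2)).add (((hM t ht).sub_const a).pow 2)
  set g : ℝ → ℝ := fun t => (V t - c / m) * Real.exp (m * t) with hg
  have hgd : ∀ t, 0 ≤ t → HasDerivAt g
      (((2:ℕ) * T t ^ 1 * (σ * (I t - T t)) + (2:ℕ) * I t ^ 1 * (T t * (r₀ - M t) - I t)
        + (2:ℕ) * (M t - a) ^ 1 * (T t * I t - β * M t)) * Real.exp (m * t)
        + (V t - c / m) * (Real.exp (m * t) * m)) t := by
    intro t ht
    have he : HasDerivAt (fun t : ℝ => Real.exp (m * t)) (Real.exp (m * t) * m) t := by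
      have := ((hasDerivAt_id t).const_mul m).exp
      simpa using this
    exact ((hVd t ht).sub_const (c / m)).mul he
  -- the derivative is nonpositive
  have hderiv_nonpos : ∀ t, 0 ≤ t →
      ((2:ℕ) * T t ^ 1 * (σ * (I t - T t)) + (2:ℕ) * I t ^ 1 * (T t * (r₀ - M t) - I t)
        + (2:ℕ) * (M t - a) ^ 1 * (T t * I t - β * M t)) * Real.exp (m * t)
        + (V t - c / m) * (Real.exp (m * t) * m) ≤ 0 := by
    intro t ht
    have hexp : 0 < Real.exp (m * t) := Real.exp_pos _
    have hkey : (2:ℕ) * T t ^ 1 * (σ * (I t - T t)) + (2:ℕ) * I t ^ 1 * (T t * (r₀ - M t) - I t)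
        + (2:ℕ) * (M t - a) ^ 1 * (T t * I t - β * M t) + m * (V t - c / m) ≤ 0 := by
      have hVt := hV t
      have h2 : m * (T t ^ 2 + I t ^ 2 + (M t - a) ^ 2 - c / m)
          = m * T t ^ 2 + m * I t ^ 2 + m * (M t - a) ^ 2 - c := by
        field_simp
      rw [hVt, h2, hc, ha]
      push_cast
      nlinarith [sq_nonneg (T t), sq_nonneg (I t), sq_nonneg (M t - (σ + r₀)), sq_nonneg (M t),
        mul_nonneg (sub_nonneg.2 hm1) (sq_nonneg (T t)),
        mul_nonneg (sub_nonneg.2 hm2) (sq_nonneg (I t)),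
        mul_nonneg (sub_nonneg.2 hm3) (sq_nonneg (M t - (σ + r₀)))]
    calc ((2:ℕ) * T t ^ 1 * (σ * (I t - T t)) + (2:ℕ) * I t ^ 1 * (T t * (r₀ - M t) - I t)
        + (2:ℕ) * (M t - a) ^ 1 * (T t * I t - β * M t)) * Real.exp (m * t)
        + (V t - c / m) * (Real.exp (m * t) * m)
        = ((2:ℕ) * T t ^ 1 * (σ * (I t - T t)) + (2:ℕ) * I t ^ 1 * (T t * (r₀ - M t) - I t)
        + (2:ℕ) * (M t - a) ^ 1 * (T t * I t - β * M t) + m * (V t - c / m)) * Real.exp (m * t) := by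
          ring
      _ ≤ 0 * Real.exp (m * t) := by
          apply mul_le_mul_of_nonneg_right hkey hexp.le
      _ = 0 := by ring
  -- g is antitone on [0, ∞)
  have hanti : AntitoneOn g (Set.Ici (0:ℝ)) := by
    apply antitoneOn_of_deriv_nonpos (convex_Ici 0)
    · exact fun x hx => ((hgd x hx).continuousAt).continuousWithinAt
    · intro x hx
      rw [interior_Ici] at hx
      exact ((hgd x (le_of_lt hx)).differentiableAt).differentiableWithinAt
    · intro x hx
      rw [interior_Ici] at hx
      rw [(hgd x (le_of_lt hx)).deriv]
      exact hderiv_nonpos x (le_of_lt hx)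
  intro t ht
  have hgle : g t ≤ g 0 := hanti (Set.self_mem_Ici) ht ht
  have hg0 : g 0 = V 0 - c / m := by simp [hg]
  have hgt : g t = (V t - c / m) * Real.exp (m * t) := rfl
  have he1 : 1 ≤ Real.exp (m * t) := Real.one_le_exp (by positivity)
  rcases le_total (V t) (c / m) with h | h
  · exact le_max_of_le_right h
  · apply le_max_of_le_left
    have : V t - c / m ≤ (V t - c / m) * Real.exp (m * t) := by
      nlinarith [sub_nonneg.2 h]
    rw [hgt, hg0] at hgle
    linarith
end

section
/- Assume σ > β + 1, β > 0, 1 < r₀ < r_H with r_H = σ(σ+β+3)/(σ−β−1). Then with a₁ = σ+β+1, a₂ = β(σ+r₀), a₃ = 2βσ(r₀−1), the Routh–Hurwitz conditions a₁ > 0, a₃ > 0, a₁a₂ > a₃ hold; consequently every root of λ³ + a₁λ² + a₂λ + a₃ has strictly negative real part. -/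
theorem routh_hurwitz_stability
    (σ β r₀ : ℝ) (hσ : σ > β + 1) (hβ : 0 < β)
    (hr1 : 1 < r₀) (hrH : r₀ < σ * (σ + β + 3) / (σ - β - 1))
    (a₁ a₂ a₃ : ℝ) (h₁ : a₁ = σ + β + 1) (h₂ : a₂ = β * (σ + r₀))
    (h₃ : a₃ = 2 * β * σ * (r₀ - 1)) :
    0 < a₁ ∧ 0 < a₃ ∧ a₁ * a₂ > a₃ ∧
    ∀ z : ℂ, z ^ 3 + (a₁ : ℂ) * z ^ 2 + (a₂ : ℂ) * z + (a₃ : ℂ) = 0 → z.re < 0 := by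
  have hσ0 : 0 < σ := by linarith
  have hden : 0 < σ - β - 1 := by linarith
  have hr' : r₀ * (σ - β - 1) < σ * (σ + β + 3) := by
    rw [div_eq_mul_inv] at hrH
    calc r₀ * (σ - β - 1) < σ * (σ + β + 3) * (σ - β - 1)⁻¹ * (σ - β - 1) := by
          exact mul_lt_mul_of_pos_right hrH hden
      _ = σ * (σ + β + 3) := by field_simp
  have ha1 : 0 < a₁ := by rw [h₁]; linarith
  have ha2 : 0 < a₂ := by rw [h₂]; nlinarith
  have ha3 : 0 < a₃ := by rw [h₃]; exact mul_pos (mul_pos (by linarith) hσ0) (by linarith)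
  have hgap : a₁ * a₂ > a₃ := by rw [h₁, h₂, h₃]; nlinarith
  refine ⟨ha1, ha3, hgap, ?_⟩
  intro z hz
  by_contra hx
  push_neg at hx
  set x := z.re with hxdef
  set y := z.im with hydef
  have hre : x^3 - 3*x*y^2 + a₁*(x^2 - y^2) + a₂*x + a₃ = 0 := by
    have := congrArg Complex.re hz
    simp [Complex.ext_iff, pow_succ, Complex.mul_re, Complex.mul_im, Complex.add_re,
      Complex.add_im] at this
    ring_nf at this ⊢
    linarith [this]
  have him : y * (3*x^2 - y^2 + 2*a₁*x + a₂) = 0 := by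
    have := congrArg Complex.im hz
    simp [Complex.ext_iff, pow_succ, Complex.mul_re, Complex.mul_im, Complex.add_re,
      Complex.add_im] at this
    ring_nf at this ⊢
    linarith [this]
  rcases mul_eq_zero.mp him with hy0 | hy
  · -- real root x ≥ 0 : contradiction
    rw [hy0] at hre
    nlinarith [mul_nonneg (mul_nonneg hx hx) hx, mul_nonneg (le_of_lt ha1) (mul_nonneg hx hx), mul_nonneg (le_of_lt ha2) hx]
  · -- y² = 3x² + 2a₁x + a₂; substitute
    have hy2 : y^2 = 3*x^2 + 2*a₁*x + a₂ := by linarith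
    rw [hy2] at hre
    nlinarith [mul_nonneg (mul_nonneg hx hx) hx, mul_nonneg (le_of_lt ha1) (mul_nonneg hx hx), mul_nonneg (mul_nonneg (le_of_lt ha1) (le_of_lt ha1)) hx, mul_nonneg (le_of_lt ha2) hx]
end
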